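/- Let M be an m×m symmetric positive definite real matrix, b ∈ ℝᵐ, and consider the linear system (in block form) [[M₁₁ + P₁, M₁₂],[M₁₂ᵀ, M₂₂ + P₂]] (α*, γ*)ᵀ = (b₁, b₂)ᵀ, where P₁, P₂ are symmetric positive definite diagonal blocks depending continuously on parameters. If P₁ = λD₁(α) with D₁(α) = diag(α_j⁻²) and P₂ = λD₂(γ) with D₂(γ) = diag(γ_ℓ⁻²), then as γ → 0 (componentwise, with γ_ℓ ≠ 0), the solution satisfies γ*(α, γ) → 0 and α*(α, γ) → (M₁₁ + λD₁(α))⁻¹ b₁. -/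

import Mathlib

open Matrix

/-- Solution of the penalized block linear system
`(M + λ·diag(α₁⁻², …, γ₁⁻², …)) (α*, γ*)ᵀ = b`. -/
noncomputable def sol {q r : ℕ} (M : Matrix (Fin q ⊕ Fin r) (Fin q ⊕ Fin r) ℝ)
    (b : Fin q ⊕ Fin r → ℝ) (lam : ℝ) (α : Fin q → ℝ) (γ : Fin r → ℝ) :
    Fin q ⊕ Fin r → ℝ :=
  (M + lam • Matrix.diagonal
      (Sum.elim (fun j => 1 / (α j) ^ 2) (fun ℓ => 1 / (γ ℓ) ^ 2)))⁻¹.mulVec b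

/-- The oracle update `(M₁₁ + λ D₁(α))⁻¹ b₁`. -/
noncomputable def oracleSol {q r : ℕ} (M : Matrix (Fin q ⊕ Fin r) (Fin q ⊕ Fin r) ℝ)
    (b : Fin q ⊕ Fin r → ℝ) (lam : ℝ) (α : Fin q → ℝ) : Fin q → ℝ :=
  (M.toBlocks₁₁ + lam • Matrix.diagonal fun j => 1 / (α j) ^ 2)⁻¹.mulVec
    (fun j => b (Sum.inl j))

/-! Multiplying the `γ`-rows of the system by `γ_ℓ²` replaces the exploding penalty `λ γ_ℓ⁻²` by
the constant `λ`. The rescaled matrix `diag(1, γ²) M + λ diag(D₁(α), 1)` depends continuously on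
`γ`, and at `γ = 0` it is block upper triangular with diagonal blocks `M₁₁ + λ D₁(α)` and `λ I`,
hence invertible. Continuity of the matrix inverse at `γ = 0` then gives the limit
`((M₁₁ + λ D₁(α))⁻¹ b₁, 0)`, and for `γ` with nonzero entries the rescaled system has the same
solution as the original one. -/

open Filter Topology

namespace Matrix

variable {ι κ : Type*}

theorem PosDef.toBlocks₁₁ {R : Type*} [Ring R] [PartialOrder R] [StarRing R]
    {M : Matrix (ι ⊕ κ) (ι ⊕ κ) R} (hM : M.PosDef) :
    M.toBlocks₁₁.PosDef :=
  hM.submatrix Sum.inl_injective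

theorem PosDef.isUnit_det_add_smul_diagonal {n : Type*} [Fintype n] [DecidableEq n]
    {M : Matrix n n ℝ} (hM : M.PosDef) {lam : ℝ} (hlam : 0 ≤ lam) {d : n → ℝ} (hd : 0 ≤ d) :
    IsUnit (M + lam • diagonal d).det :=
  (isUnit_iff_isUnit_det _).1 (hM.add_posSemidef ((PosSemidef.diagonal hd).smul hlam)).isUnit

theorem inv_fromBlocks_zero₂₁_mulVec_sumElim_zero {m n : Type*} [Fintype m] [Fintype n]
    [DecidableEq m] [DecidableEq n] {A : Matrix m m ℝ} (B : Matrix m n ℝ) {D : Matrix n n ℝ}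
    (hA : IsUnit A) (hD : IsUnit D) (u : m → ℝ) :
    (fromBlocks A B 0 D)⁻¹ *ᵥ Sum.elim u 0 = Sum.elim (A⁻¹ *ᵥ u) 0 := by
  rw [inv_fromBlocks_zero₂₁_of_isUnit_iff _ _ _ (iff_of_true hA hD), fromBlocks_mulVec]
  simp

def rowScale (γ : κ → ℝ) : ι ⊕ κ → ℝ :=
  Sum.elim 1 fun ℓ => γ ℓ ^ 2

theorem continuous_rowScale : Continuous (rowScale : (κ → ℝ) → ι ⊕ κ → ℝ) :=
  continuous_pi fun
    | .inl _ => continuous_const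
    | .inr ℓ => (continuous_apply ℓ).pow 2

section ScaledSystem

variable [Fintype ι] [Fintype κ] [DecidableEq ι] [DecidableEq κ]

def scaledSystem (M : Matrix (ι ⊕ κ) (ι ⊕ κ) ℝ) (lam : ℝ) (p : ι → ℝ) (γ : κ → ℝ) :
    Matrix (ι ⊕ κ) (ι ⊕ κ) ℝ :=
  diagonal (rowScale γ) * M + lam • diagonal (Sum.elim p 1)

theorem continuous_scaledSystem (M : Matrix (ι ⊕ κ) (ι ⊕ κ) ℝ) (lam : ℝ) (p : ι → ℝ) :
    Continuous (scaledSystem M lam p) :=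
  (continuous_rowScale.matrix_diagonal.mul continuous_const).add continuous_const

theorem scaledSystem_zero (M : Matrix (ι ⊕ κ) (ι ⊕ κ) ℝ) (lam : ℝ) (p : ι → ℝ) :
    scaledSystem M lam p 0 =
      fromBlocks (M.toBlocks₁₁ + lam • diagonal p) M.toBlocks₁₂ 0 (lam • 1) := by
  ext (i | i) (j | j) <;>
    simp [scaledSystem, rowScale, fromBlocks, diagonal_mul, diagonal_apply, one_apply,
      toBlocks₁₁, toBlocks₁₂]

theorem diagonal_rowScale_mul_add_smul_diagonal (M : Matrix (ι ⊕ κ) (ι ⊕ κ) ℝ) (lam : ℝ)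
    (p : ι → ℝ) {γ : κ → ℝ} (hγ : ∀ ℓ, γ ℓ ≠ 0) :
    diagonal (rowScale γ) * (M + lam • diagonal (Sum.elim p fun ℓ => 1 / γ ℓ ^ 2)) =
      scaledSystem M lam p γ := by
  rw [scaledSystem, mul_add, mul_smul_comm, diagonal_mul_diagonal]
  congr 3
  ext (i | ℓ)
  · simp [rowScale]
  · simp [rowScale, hγ ℓ]

theorem add_smul_diagonal_inv_mulVec_eq_scaledSystem_inv_mulVec
    (M : Matrix (ι ⊕ κ) (ι ⊕ κ) ℝ) (lam : ℝ) (p : ι → ℝ) {γ : κ → ℝ} (hγ : ∀ ℓ, γ ℓ ≠ 0)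
    (b : ι ⊕ κ → ℝ) :
    (M + lam • diagonal (Sum.elim p fun ℓ => 1 / γ ℓ ^ 2))⁻¹ *ᵥ b =
      (scaledSystem M lam p γ)⁻¹ *ᵥ (diagonal (rowScale γ) *ᵥ b) := by
  have hscale : IsUnit (diagonal (rowScale γ : ι ⊕ κ → ℝ)).det := by
    rw [det_diagonal]
    refine (Finset.prod_ne_zero_iff.2 fun i _ => ?_).isUnit
    rcases i with i | ℓ
    · exact one_ne_zero
    · exact pow_ne_zero 2 (hγ ℓ)
  rw [← diagonal_rowScale_mul_add_smul_diagonal M lam p hγ, mul_inv_rev, mulVec_mulVec,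
    Matrix.mul_assoc, nonsing_inv_mul _ hscale, Matrix.mul_one]

theorem tendsto_scaledSystem_inv_mulVec (M : Matrix (ι ⊕ κ) (ι ⊕ κ) ℝ) {lam : ℝ}
    (hlam : lam ≠ 0) {p : ι → ℝ} (hdet : IsUnit (M.toBlocks₁₁ + lam • diagonal p).det)
    (b : ι ⊕ κ → ℝ) :
    Tendsto (fun γ => (scaledSystem M lam p γ)⁻¹ *ᵥ (diagonal (rowScale γ) *ᵥ b)) (𝓝 0)
      (𝓝 (Sum.elim ((M.toBlocks₁₁ + lam • diagonal p)⁻¹ *ᵥ (b ∘ Sum.inl)) 0)) := by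
  have hD : IsUnit (lam • 1 : Matrix κ κ ℝ) := isUnit_one.smul hlam.isUnit.unit
  have hrhs : diagonal (rowScale 0) *ᵥ b = Sum.elim (b ∘ Sum.inl) 0 := by
    ext (i | ℓ) <;> simp [rowScale, mulVec_diagonal]
  have hdet0 : IsUnit (scaledSystem M lam p 0).det := by
    rw [scaledSystem_zero, det_fromBlocks_zero₂₁]
    exact hdet.mul ((isUnit_iff_isUnit_det _).1 hD)
  have hinv : ContinuousAt (fun γ => (scaledSystem M lam p γ)⁻¹) 0 :=
    (continuousAt_matrix_inv _ (NormedRing.inverse_continuousAt hdet0.unit)).comp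
      (continuous_scaledSystem M lam p).continuousAt
  have hrhs_cont : Continuous fun γ : κ → ℝ => diagonal (rowScale γ : ι ⊕ κ → ℝ) *ᵥ b :=
    continuous_rowScale.matrix_diagonal.matrix_mulVec continuous_const
  have hlim := ((continuous_fst.matrix_mulVec continuous_snd).tendsto _).comp
    (hinv.tendsto.prodMk_nhds (hrhs_cont.tendsto 0))
  rwa [Function.comp_def, hrhs, scaledSystem_zero,
    inv_fromBlocks_zero₂₁_mulVec_sumElim_zero _ ((isUnit_iff_isUnit_det _).2 hdet) hD] at hlim

theorem tendsto_add_smul_diagonal_inv_mulVec (M : Matrix (ι ⊕ κ) (ι ⊕ κ) ℝ) {lam : ℝ}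
    (hlam : lam ≠ 0) {p : ι → ℝ} (hdet : IsUnit (M.toBlocks₁₁ + lam • diagonal p).det)
    (b : ι ⊕ κ → ℝ) :
    Tendsto (fun γ : κ → ℝ => (M + lam • diagonal (Sum.elim p fun ℓ => 1 / γ ℓ ^ 2))⁻¹ *ᵥ b)
      (𝓝[{γ | ∀ ℓ, γ ℓ ≠ 0}] 0)
      (𝓝 (Sum.elim ((M.toBlocks₁₁ + lam • diagonal p)⁻¹ *ᵥ (b ∘ Sum.inl)) 0)) :=
  ((tendsto_scaledSystem_inv_mulVec M hlam hdet b).mono_left nhdsWithin_le_nhds).congr'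
    (eventually_nhdsWithin_of_forall fun _ hγ =>
      (add_smul_diagonal_inv_mulVec_eq_scaledSystem_inv_mulVec M lam p hγ b).symm)

end ScaledSystem

end Matrix

theorem stmt18_general {q r : ℕ} (M : Matrix (Fin q ⊕ Fin r) (Fin q ⊕ Fin r) ℝ)
    (hM : M.PosDef) (b : Fin q ⊕ Fin r → ℝ) (lam : ℝ) (hlam : 0 < lam)
    (α : Fin q → ℝ) :
    Filter.Tendsto
        (fun γ : EuclideanSpace ℝ (Fin r) =>
          (WithLp.toLp 2 (fun i => sol M b lam α γ (Sum.inr i)) : EuclideanSpace ℝ (Fin r)))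
        (nhdsWithin 0 {γ | ∀ ℓ, γ ℓ ≠ 0}) (nhds 0) ∧
    Filter.Tendsto
        (fun γ : EuclideanSpace ℝ (Fin r) =>
          (WithLp.toLp 2 (fun j => sol M b lam α γ (Sum.inl j)) : EuclideanSpace ℝ (Fin q)))
        (nhdsWithin 0 {γ | ∀ ℓ, γ ℓ ≠ 0})
        (nhds (WithLp.toLp 2 (oracleSol M b lam α) : EuclideanSpace ℝ (Fin q))) := by
  have hp : 0 ≤ fun j => 1 / α j ^ 2 := fun j => by positivity
  have hsol := tendsto_add_smul_diagonal_inv_mulVec M hlam.ne'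
    (hM.toBlocks₁₁.isUnit_det_add_smul_diagonal hlam.le hp) b
  have hofLp : Tendsto (WithLp.ofLp (p := 2))
      (𝓝[{γ : EuclideanSpace ℝ (Fin r) | ∀ ℓ, γ ℓ ≠ 0}] 0) (𝓝[{γ | ∀ ℓ, γ ℓ ≠ 0}] 0) :=
    (PiLp.continuous_ofLp 2 _).continuousWithinAt.tendsto_nhdsWithin fun _ hγ => hγ
  have hlim := hsol.comp hofLp
  constructor
  · exact (((PiLp.continuous_toLp 2 _).comp
      (continuous_pi fun ℓ => continuous_apply (Sum.inr ℓ))).tendsto _).comp hlim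
  · exact (((PiLp.continuous_toLp 2 _).comp
      (continuous_pi fun j => continuous_apply (Sum.inl j))).tendsto _).comp hlim

/-- As `γ → 0` (through vectors with all components nonzero), the solution of the
penalized block system satisfies `γ*(α, γ) → 0` and
`α*(α, γ) → (M₁₁ + λ D₁(α))⁻¹ b₁`. -/
theorem stmt18 {q r : ℕ} (M : Matrix (Fin q ⊕ Fin r) (Fin q ⊕ Fin r) ℝ)
    (hM : M.PosDef) (b : Fin q ⊕ Fin r → ℝ) (lam : ℝ) (hlam : 0 < lam)
    (α : Fin q → ℝ) (hα : ∀ j, α j ≠ 0) :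
    Filter.Tendsto
        (fun γ : EuclideanSpace ℝ (Fin r) =>
          (WithLp.toLp 2 (fun i => sol M b lam α γ (Sum.inr i)) : EuclideanSpace ℝ (Fin r)))
        (nhdsWithin 0 {γ | ∀ ℓ, γ ℓ ≠ 0}) (nhds 0) ∧
    Filter.Tendsto
        (fun γ : EuclideanSpace ℝ (Fin r) =>
          (WithLp.toLp 2 (fun j => sol M b lam α γ (Sum.inl j)) : EuclideanSpace ℝ (Fin q)))
        (nhdsWithin 0 {γ | ∀ ℓ, γ ℓ ≠ 0})
        (nhds (WithLp.toLp 2 (oracleSol M b lam α) : EuclideanSpace ℝ (Fin q))) :=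
  stmt18_general M hM b lam hlam α
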